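/- Let (𝒱, J) be an essentially small site and let (ℬ, F) be a base for 𝒱, and equip ℬ with the F-induced topology. For any presheaf of sets 𝒫 on 𝒱, the restriction along F of the J-sheafification of 𝒫 is naturally isomorphic to the sheafification, for the F-induced topology, of the restriction of 𝒫 along F; that is, (𝒫^a) ∘ F^op ≅ (𝒫 ∘ F^op)^a, where (−)^a denotes sheafification for the respective topologies. -/

import Mathlib

open CategoryTheory

universe u

/-- Property (⋆) of Beilinson for families of pairs indexed by `Fin n`:
for every object `X` of `V` and every finite family of pairs `(Bo α, f α)` with
`f α : X ⟶ F.obj (Bo α)`, there exist objects `B' β` of `B` and morphisms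
`g β : F.obj (B' β) ⟶ X` generating a `J`-covering sieve of `X`, such that every
composite `g β ≫ f α` is the image under `F` of a morphism `B' β ⟶ Bo α`. -/
def StarPropertyOn {B V : Type u} [SmallCategory B] [SmallCategory V]
    (F : B ⥤ V) (J : GrothendieckTopology V) (n : ℕ) : Prop :=
  ∀ (X : V) (Bo : Fin n → B) (f : ∀ α, X ⟶ F.obj (Bo α)),
    ∃ (ι : Type u) (B' : ι → B) (g : ∀ β, F.obj (B' β) ⟶ X),
      Sieve.ofArrows (fun β => F.obj (B' β)) g ∈ J X ∧
      ∀ (α : Fin n) (β : ι), ∃ h : B' β ⟶ Bo α, F.map h = g β ≫ f α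

/-- Property (⋆): the above for all finite families. -/
def StarProperty {B V : Type u} [SmallCategory B] [SmallCategory V]
    (F : B ⥤ V) (J : GrothendieckTopology V) : Prop :=
  ∀ n : ℕ, StarPropertyOn F J n

/-! With the induced topology, `F` is a dense subsite in Mathlib's sense: (⋆) for the empty
family makes it cover-dense, (⋆) for the pair `(𝟙, f)` makes it locally full, and faithfulness
makes it locally faithful. Restriction along a dense subsite is an equivalence of sheaf
categories compatible with sheafification. -/

section

variable {B V : Type u} [SmallCategory B] [SmallCategory V] {F : B ⥤ V}
  {J : GrothendieckTopology V}

theorem StarPropertyOn.isCoverDense (hF : StarPropertyOn F J 0) : F.IsCoverDense J where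
  is_cover U := by
    obtain ⟨ι, B', g, hg, -⟩ := hF U Fin.elim0 fun α => α.elim0
    refine J.superset_covering ?_ hg
    rintro Y _ ⟨Z, a, b, ⟨i⟩, rfl⟩
    exact ⟨⟨B' i, a, g i, rfl⟩⟩

theorem StarPropertyOn.exists_covering_ofArrows_map_mem_imageSieve (hF : StarPropertyOn F J 2)
    {U W : B} (f : F.obj U ⟶ F.obj W) :
    ∃ (ι : Type u) (B' : ι → B) (a : ∀ i, B' i ⟶ U),
      Sieve.ofArrows (fun i => F.obj (B' i)) (fun i => F.map (a i)) ∈ J (F.obj U) ∧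
      ∀ i, F.imageSieve f (a i) := by
  let Bo : Fin 2 → B := Fin.cons U fun _ => W
  obtain ⟨ι, B', g, hg, hlift⟩ :=
    hF (F.obj U) Bo (Fin.cons (α := fun i => F.obj U ⟶ F.obj (Bo i)) (𝟙 _) fun _ => f)
  choose a ha using hlift 0
  obtain rfl : g = fun i => F.map (a i) := funext fun i => ((ha i).trans (Category.comp_id _)).symm
  exact ⟨ι, B', a, hg, hlift 1⟩

theorem StarPropertyOn.isLocallyFull (hF : StarPropertyOn F J 2) : F.IsLocallyFull J where
  functorPushforward_imageSieve_mem f := by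
    obtain ⟨ι, B', a, ha, hlift⟩ := hF.exists_covering_ofArrows_map_mem_imageSieve f
    refine J.superset_covering ?_ ha
    rintro Y _ ⟨Z, e, _, ⟨i⟩, rfl⟩
    exact ⟨B' i, a i, e, hlift i, rfl⟩

theorem StarProperty.isDenseSubsite [F.Faithful] (hF : StarProperty F J)
    (K : GrothendieckTopology B)
    (hK : ∀ (X : B) (S : Sieve X), S ∈ K X ↔ S.functorPushforward F ∈ J (F.obj X)) :
    F.IsDenseSubsite K J :=
  have := (hF 0).isCoverDense
  have := (hF 2).isLocallyFull
  { functorPushforward_mem_iff := (hK _ _).symm }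

end

/-- If `(B, F)` is a base for `(V, J)` and `K` is the `F`-induced topology on `B`, then
for every presheaf of sets `P` on `V`, the restriction along `F` of the `J`-sheafification
of `P` is naturally isomorphic to the `K`-sheafification of the restriction of `P`
along `F`: `(P^a) ∘ F^op ≅ (P ∘ F^op)^a`. -/
theorem sheafification_comp_base {B V : Type u} [SmallCategory B] [SmallCategory V]
    (J : GrothendieckTopology V) (F : B ⥤ V) [F.Faithful]
    (hF : StarProperty F J)
    (K : GrothendieckTopology B)
    (hK : ∀ (X : B) (S : Sieve X), S ∈ K X ↔ S.functorPushforward F ∈ J (F.obj X))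
    (P : Vᵒᵖ ⥤ Type u) :
    Nonempty ((F.op ⋙ ((presheafToSheaf J (Type u)).obj P).val) ≅
      ((presheafToSheaf K (Type u)).obj (F.op ⋙ P)).val) := by
  have := hF.isDenseSubsite K hK
  exact ⟨(sheafToPresheaf K (Type u)).mapIso
    ((Functor.IsDenseSubsite.sheafEquivSheafificationCompatibility K J F (Type u)).app P).symm⟩
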